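/- Let n ≥ 1 with n ∈ N_B and n+1 ∉ N_B, and let ε_1,…,ε_n with ε_i ∈ {0,1,…,d_i−1} and ε_n ≠ 0. Then the quasi-nega-D values of the following two D-digit sequences are equal: the sequence with digits ε_1,…,ε_{n−1}, d_n−1−ε_n at position n, 0 at position n+1, and β_k at every position k ≥ n+2; and the sequence with digits ε_1,…,ε_{n−1}, d_n−ε_n at position n, d_{n+1}−1 at position n+1, and γ_k at every position k ≥ n+2. -/

import Mathlib

/-! The two expansions differ by a carry at place `n`: as `σ_n = -1`, the digit change there
contributes `+1 / (d_1 ⋯ d_n)`, while at every place `k > n` the sign `σ_k` and the swap of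
`β_k` with `γ_k` combine to a contribution `-(d_k - 1) / (d_1 ⋯ d_k)`. These cancel because
`(d_k - 1) / (d_1 ⋯ d_k) = 1 / (d_1 ⋯ d_{k-1}) - 1 / (d_1 ⋯ d_k)` telescopes to `1 / (d_1 ⋯ d_n)`. -/

open scoped Classical BigOperators

/-- Sign of the `n`-th term: `-1` if `n ∈ N_B`, `+1` otherwise. -/
noncomputable def sigma (B : Set ℕ+) (n : ℕ+) : ℝ := if n ∈ B then -1 else 1

/-- The partial product `d_1 d_2 ⋯ d_n`. -/
noncomputable def dprod (d : ℕ+ → ℕ) (n : ℕ+) : ℝ := ∏ i ∈ Finset.Icc 1 n, (d i : ℝ)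

/-- The quasi-nega-D value of a D-digit sequence `ε`:
`T(ε) = Σ_{n≥1} σ_n ε_n / (d_1 d_2 ⋯ d_n)`. -/
noncomputable def qndVal (d : ℕ+ → ℕ) (B : Set ℕ+) (ε : ℕ+ → ℕ) : ℝ :=
  ∑' n : ℕ+, sigma B n * (ε n : ℝ) / dprod d n

open Filter Topology

theorem hasSum_sub_succ_of_antitone {u : ℕ → ℝ} (hu : Antitone u)
    (hlim : Tendsto u atTop (𝓝 0)) : HasSum (fun m => u m - u (m + 1)) (u 0) := by
  refine (hasSum_iff_tendsto_nat_of_nonneg (fun m => sub_nonneg.2 (hu m.le_succ)) _).2 ?_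
  simp_rw [Finset.sum_range_sub']
  simpa using tendsto_const_nhds.sub hlim

section dprod

variable {d : ℕ+ → ℕ}

lemma dprod_add_one (k : ℕ+) : dprod d (k + 1) = dprod d k * d (k + 1) := by
  rw [dprod, dprod, ← Finset.insert_Icc_right_eq_Icc_add_one one_le,
    Finset.prod_insert (by simp), mul_comm]

lemma dprod_pos (hd : ∀ k, 0 < d k) (k : ℕ+) : 0 < dprod d k :=
  Finset.prod_pos fun i _ => by exact_mod_cast hd i

lemma two_pow_le_dprod (hd : ∀ k, 2 ≤ d k) (k : ℕ+) : (2 : ℝ) ^ (k : ℕ) ≤ dprod d k := by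
  calc (2 : ℝ) ^ (k : ℕ) = ∏ _i ∈ Finset.Icc 1 k, (2 : ℝ) := by simp
    _ ≤ dprod d k := Finset.prod_le_prod (fun _ _ => by norm_num) fun i _ => by exact_mod_cast hd i

lemma inv_dprod_sub_inv_dprod_add_one (hd : ∀ k, 0 < d k) (k : ℕ+) :
    (dprod d k)⁻¹ - (dprod d (k + 1))⁻¹ = ((d (k + 1) : ℝ) - 1) / dprod d (k + 1) := by
  have hk := (dprod_pos hd k).ne'
  have hdk : (d (k + 1) : ℝ) ≠ 0 := (Nat.cast_pos.2 (hd (k + 1))).ne'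
  rw [dprod_add_one]
  field_simp

theorem hasSum_sub_one_div_dprod_of_lt (hd : ∀ k, 2 ≤ d k) (n : ℕ+) :
    HasSum (fun k => if n < k then ((d k : ℝ) - 1) / dprod d k else 0) (dprod d n)⁻¹ := by
  have hd0 : ∀ k, 0 < d k := fun k => zero_lt_two.trans_le (hd k)
  let i : ℕ → ℕ+ := fun m => ⟨n + m, by positivity⟩
  have hi_coe : ∀ m, (i m : ℕ) = n + m := fun m => rfl
  have hi_succ : ∀ m, i (m + 1) = i m + 1 := fun m => PNat.eq (by simp [hi_coe, add_assoc])
  have hi_inj : Function.Injective fun m => i (m + 1) := fun a b h => by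
    simpa [hi_coe] using congrArg PNat.val h
  have hu_anti : Antitone fun m => (dprod d (i m))⁻¹ := antitone_nat_of_succ_le fun m => by
    rw [hi_succ, ← sub_nonneg, inv_dprod_sub_inv_dprod_add_one hd0]
    exact div_nonneg (sub_nonneg.2 (by exact_mod_cast hd0 _)) (dprod_pos hd0 _).le
  have hu_lim : Tendsto (fun m => (dprod d (i m))⁻¹) atTop (𝓝 0) := by
    refine tendsto_inv_atTop_zero.comp (tendsto_atTop_mono (fun m => ?_)
      (tendsto_pow_atTop_atTop_of_one_lt one_lt_two))
    exact (pow_le_pow_right₀ one_le_two (by simp [hi_coe])).trans (two_pow_le_dprod hd (i m))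
  rw [← hi_inj.hasSum_iff]
  · convert hasSum_sub_succ_of_antitone hu_anti hu_lim using 2 with m
    · have hlt : n < i m + 1 := Order.lt_add_one_iff.2 (PNat.coe_le_coe _ _ |>.1 (by simp [hi_coe]))
      rw [Function.comp_apply, hi_succ, if_pos hlt, inv_dprod_sub_inv_dprod_add_one hd0]
    · exact congrArg _ (PNat.eq rfl)
  · intro k hk
    refine if_neg fun hnk => hk ⟨(k : ℕ) - n - 1, PNat.eq ?_⟩
    have : (n : ℕ) < k := hnk
    simp only [hi_coe]
    omega

end dprod

section qndVal

variable {d : ℕ+ → ℕ} {B : Set ℕ+}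

lemma abs_sigma (B : Set ℕ+) (k : ℕ+) : |sigma B k| = 1 := by
  unfold sigma; split_ifs <;> simp

lemma summable_sigma_mul_div_dprod (hd : ∀ k, 2 ≤ d k) {ε : ℕ+ → ℕ} (hε : ∀ k, ε k < d k) :
    Summable fun k => sigma B k * (ε k : ℝ) / dprod d k := by
  refine (hasSum_sub_one_div_dprod_of_lt hd 1).summable.of_norm_bounded_eventually ?_
  filter_upwards [eventually_cofinite_ne 1] with k hk
  have hP := dprod_pos (fun k => zero_lt_two.trans_le (hd k)) k
  have hεk : (ε k : ℝ) ≤ d k - 1 := by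
    rw [le_sub_iff_add_le]; exact_mod_cast hε k
  rw [if_pos (one_le.lt_of_ne' hk), Real.norm_eq_abs, abs_div, abs_mul, abs_sigma, one_mul,
    Nat.abs_cast, abs_of_pos hP]
  gcongr

theorem qndVal_eq_of_carry (hd : ∀ k, 2 ≤ d k) {ε ε' : ℕ+ → ℕ} (hε : ∀ k, ε k < d k)
    (hε' : ∀ k, ε' k < d k) (n : ℕ+) (hlt : ∀ k < n, ε k = ε' k)
    (hn : sigma B n * ((ε n : ℝ) - ε' n) = 1)
    (hgt : ∀ k, n < k → sigma B k * ((ε k : ℝ) - ε' k) = -((d k : ℝ) - 1)) :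
    qndVal d B ε = qndVal d B ε' := by
  have hdiff : HasSum
      (fun k => sigma B k * (ε k : ℝ) / dprod d k - sigma B k * (ε' k : ℝ) / dprod d k) 0 := by
    have h := (hasSum_ite_eq n (dprod d n)⁻¹).sub (hasSum_sub_one_div_dprod_of_lt hd n)
    rw [sub_self] at h
    refine h.congr_fun fun k => ?_
    rw [← sub_div, ← mul_sub]
    rcases lt_trichotomy k n with hk | rfl | hk
    · simp [hlt k hk, hk.ne, hk.not_gt]
    · simp [hn]
    · simp [hgt k hk, hk.ne', hk]
      ring
  exact sub_eq_zero.1 <| ((summable_sigma_mul_div_dprod hd hε).hasSum.sub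
    (summable_sigma_mul_div_dprod hd hε').hasSum).unique hdiff

end qndVal

/-- Case `n ∈ N_B`, `n+1 ∉ N_B`: the two indicated D-digit sequences have equal
quasi-nega-D values. -/
theorem quasiNegaD_two_reps_mem_notMem (d : ℕ+ → ℕ) (hd : ∀ k, 2 ≤ d k) (B : Set ℕ+)
    (n : ℕ+) (hn : n ∈ B) (hn1 : n + 1 ∉ B)
    (ε : ℕ+ → ℕ) (hε : ∀ k, ε k < d k) (hεn : ε n ≠ 0) :
    qndVal d B (fun k =>
        if k < n then ε k else if k = n then d n - 1 - ε n
        else if k = n + 1 then 0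
        else if k ∈ B then d k - 1 else 0)
      = qndVal d B (fun k =>
        if k < n then ε k else if k = n then d n - ε n
        else if k = n + 1 then d (n + 1) - 1
        else if k ∉ B then d k - 1 else 0) := by
  have hdigit : ∀ k, ((d k - 1 : ℕ) : ℝ) = d k - 1 := fun k => by
    rw [Nat.cast_sub ((hd k).trans' one_le_two), Nat.cast_one]
  refine qndVal_eq_of_carry hd (fun k => ?_) (fun k => ?_) n (fun k hk => by simp [hk]) ?_ ?_
  · have := hd k; have := hε k; split_ifs <;> subst_vars <;> omega
  · have := hd k; have := hε k; split_ifs <;> subst_vars <;> omega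
  · have := hε n
    simp only [lt_irrefl, if_false, if_true, sigma, hn]
    rw [Nat.cast_sub (by omega), Nat.cast_sub (by omega), Nat.cast_sub this.le]
    ring
  · intro k hk
    simp only [hk.not_gt, hk.ne', if_false, sigma]
    by_cases hk1 : k = n + 1
    · subst hk1; simp [hn1, hdigit]
    · by_cases hB : k ∈ B <;> simp [hk1, hB, hdigit]
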